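/- arXiv:2506.17143 — 8 statements merged into one kernel-verified Lean document; each statement's English description precedes it below -/
import Mathlib

section
/- Let A be a C*-algebra, let e be an ε_e-quasi-idempotent and f an ε_f-quasi-idempotent, and set δ := ‖e − f‖. If max{ε_e, ε_f} + δ²/4 < 1/4, then for every s ∈ [0,1] the element (1−s)·e + s·f satisfies ‖((1−s)e+sf)² − ((1−s)e+sf)‖ < 1/4; in particular the straight-line path s ↦ (1−s)e + sf is a norm-continuous homotopy of quasi-idempotents from e to f. -/
/-!
Along the segment `x s = (1 - s) • e + s • f` the defect of idempotency is the convex combination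
of the defects of `e` and `f`, corrected by `s (1 - s) (e - f)²`:
`x s ^ 2 - x s = (1 - s) • (e ^ 2 - e) + s • (f ^ 2 - f) - (s * (1 - s)) • (e - f) ^ 2`.
Since `s (1 - s) ≤ 1/4`, its norm stays below `max εe εf + ‖e - f‖² / 4`.
-/

theorem convexComb_mul_self_sub_self {R A : Type*} [CommRing R] [NonUnitalRing A] [Module R A]
    [SMulCommClass R A A] [IsScalarTower R A A] (e f : A) (s : R) :
    ((1 - s) • e + s • f) * ((1 - s) • e + s • f) - ((1 - s) • e + s • f)
      = (1 - s) • (e * e - e) + s • (f * f - f) - (s * (1 - s)) • ((e - f) * (e - f)) := by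
  simp only [add_mul, mul_add, sub_mul, mul_sub, smul_mul_smul_comm]
  module

theorem norm_convexComb_mul_self_sub_self_le {A : Type*} [NonUnitalNormedRing A]
    [NormedSpace ℝ A] [SMulCommClass ℝ A A] [IsScalarTower ℝ A A] (e f : A) {s : ℝ}
    (hs : s ∈ Set.Icc (0 : ℝ) 1) :
    ‖((1 - s) • e + s • f) * ((1 - s) • e + s • f) - ((1 - s) • e + s • f)‖
      ≤ (1 - s) * ‖e * e - e‖ + s * ‖f * f - f‖ + s * (1 - s) * ‖e - f‖ ^ 2 := by
  obtain ⟨hs₀, hs₁⟩ := hs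
  have hs₁' : 0 ≤ 1 - s := sub_nonneg.mpr hs₁
  rw [convexComb_mul_self_sub_self]
  calc _ ≤ ‖(1 - s) • (e * e - e)‖ + ‖s • (f * f - f)‖
          + ‖(s * (1 - s)) • ((e - f) * (e - f))‖ := norm_sub_le_of_le (norm_add_le _ _) le_rfl
    _ ≤ _ := by
      rw [norm_smul, norm_smul, norm_smul, Real.norm_of_nonneg hs₁', Real.norm_of_nonneg hs₀,
        Real.norm_of_nonneg (mul_nonneg hs₀ hs₁'), sq]
      gcongr
      exact norm_mul_le _ _

theorem norm_convexComb_sq_sub_self_lt {A : Type*} [NormedRing A] [NormedSpace ℝ A]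
    [SMulCommClass ℝ A A] [IsScalarTower ℝ A A] {e f : A} {εe εf : ℝ}
    (he : ‖e ^ 2 - e‖ < εe) (hf : ‖f ^ 2 - f‖ < εf) {s : ℝ} (hs : s ∈ Set.Icc (0 : ℝ) 1) :
    ‖((1 - s) • e + s • f) ^ 2 - ((1 - s) • e + s • f)‖ < max εe εf + ‖e - f‖ ^ 2 / 4 := by
  simp only [sq] at he hf ⊢
  obtain ⟨hs₀, hs₁⟩ := hs
  have hconvex : (1 - s) * ‖e * e - e‖ + s * ‖f * f - f‖ < max εe εf := by
    rcases hs₀.eq_or_lt with rfl | hs₀'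
    · simpa using he.trans_le (le_max_left _ _)
    calc _ < (1 - s) * max εe εf + s * max εe εf :=
          add_lt_add_of_le_of_lt
            (mul_le_mul_of_nonneg_left (he.le.trans (le_max_left _ _)) (by linarith))
            (mul_lt_mul_of_pos_left (hf.trans_le (le_max_right _ _)) hs₀')
      _ = max εe εf := by ring
  have hquarter : s * (1 - s) * ‖e - f‖ ^ 2 ≤ ‖e - f‖ ^ 2 / 4 := by
    nlinarith [sq_nonneg ‖e - f‖, sq_nonneg (2 * s - 1)]
  linarith [norm_convexComb_mul_self_sub_self_le e f ⟨hs₀, hs₁⟩]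

theorem homotopy_of_quasiIdempotents_general {A : Type*} [CStarAlgebra A] (e f : A) (εe εf : ℝ)
    (he : ‖e ^ 2 - e‖ < εe) (hf : ‖f ^ 2 - f‖ < εf)
    (h : max εe εf + ‖e - f‖ ^ 2 / 4 < 1 / 4) :
    (∀ s : ℝ, s ∈ Set.Icc (0 : ℝ) 1 →
      ‖((1 - s) • e + s • f) ^ 2 - ((1 - s) • e + s • f)‖ < 1 / 4) ∧
    Continuous (fun s : ℝ => (1 - s) • e + s • f) ∧
    ((fun s : ℝ => (1 - s) • e + s • f) 0 = e) ∧
    ((fun s : ℝ => (1 - s) • e + s • f) 1 = f) :=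
  ⟨fun _ hs => (norm_convexComb_sq_sub_self_lt he hf hs).trans h, by fun_prop, by simp, by simp⟩

/-- If `e` is an `εe`-quasi-idempotent, `f` is an `εf`-quasi-idempotent,
`δ := ‖e − f‖`, and `max εe εf + δ²/4 < 1/4`, then every point of the straight-line path
from `e` to `f` is a quasi-idempotent, i.e. for all `s ∈ [0,1]`,
`‖((1−s)e+sf)² − ((1−s)e+sf)‖ < 1/4`; in particular the straight-line path is a
norm-continuous homotopy of quasi-idempotents from `e` to `f`. -/
theorem homotopy_of_quasiIdempotents {A : Type*} [CStarAlgebra A] (e f : A) (εe εf : ℝ)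
    (hεe : 0 < εe) (hεe' : εe ≤ 1 / 4) (hεf : 0 < εf) (hεf' : εf ≤ 1 / 4)
    (he : ‖e ^ 2 - e‖ < εe) (hf : ‖f ^ 2 - f‖ < εf)
    (h : max εe εf + ‖e - f‖ ^ 2 / 4 < 1 / 4) :
    (∀ s : ℝ, s ∈ Set.Icc (0 : ℝ) 1 →
      ‖((1 - s) • e + s • f) ^ 2 - ((1 - s) • e + s • f)‖ < 1 / 4) ∧
    Continuous (fun s : ℝ => (1 - s) • e + s • f) ∧
    ((fun s : ℝ => (1 - s) • e + s • f) 0 = e) ∧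
    ((fun s : ℝ => (1 - s) • e + s • f) 1 = f) :=
  homotopy_of_quasiIdempotents_general e f εe εf he hf h
end

section
/- Let A be a C*-algebra, let e ∈ A be an ε-quasi-idempotent and f ∈ A, and set δ := ‖e − f‖. If (2‖e‖ + (5/4)δ + 1)·δ + ε < 1/4, then f is a ((2‖e‖ + δ + 1)δ + ε)-quasi-idempotent, and for every s ∈ [0,1] the element (1−s)·e + s·f is a quasi-idempotent (so e and f are homotopic via the straight-line path of quasi-idempotents). -/
lemma quasi_aux {A : Type*} [CStarAlgebra A] (e t : A) :
    ‖(e + t) ^ 2 - (e + t)‖ ≤ ‖e ^ 2 - e‖ + 2 * ‖e‖ * ‖t‖ + ‖t‖ * ‖t‖ + ‖t‖ := by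
  have h1 : (e + t) ^ 2 - (e + t) = (((e ^ 2 - e) + e * t) + t * e) + (t * t - t) := by
    noncomm_ring
  rw [h1]
  have h2 : ‖(((e ^ 2 - e) + e * t) + t * e) + (t * t - t)‖ ≤
      ((‖e ^ 2 - e‖ + ‖e * t‖) + ‖t * e‖) + (‖t * t‖ + ‖t‖) :=
    (norm_add_le _ _).trans (add_le_add
      ((norm_add_le _ _).trans (add_le_add (norm_add_le _ _) le_rfl)) (norm_sub_le _ _))
  have m1 := norm_mul_le e t
  have m2 := norm_mul_le t e
  have m3 := norm_mul_le t t
  nlinarith [h2, norm_nonneg e, norm_nonneg t]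

/-- If `e` is an `ε`-quasi-idempotent, `δ := ‖e − f‖`, and
`(2‖e‖ + (5/4)δ + 1)δ + ε < 1/4`, then `f` is a `((2‖e‖ + δ + 1)δ + ε)`-quasi-idempotent,
and every point of the straight-line path from `e` to `f` is a quasi-idempotent. -/
theorem quasiIdempotent_of_close {A : Type*} [CStarAlgebra A] (e f : A) (ε : ℝ)
    (hε : 0 < ε) (hε' : ε ≤ 1 / 4) (he : ‖e ^ 2 - e‖ < ε)
    (h : (2 * ‖e‖ + 5 / 4 * ‖e - f‖ + 1) * ‖e - f‖ + ε < 1 / 4) :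
    ‖f ^ 2 - f‖ < (2 * ‖e‖ + ‖e - f‖ + 1) * ‖e - f‖ + ε ∧
    ∀ s : ℝ, s ∈ Set.Icc (0 : ℝ) 1 →
      ‖((1 - s) • e + s • f) ^ 2 - ((1 - s) • e + s • f)‖ < 1 / 4 := by
  have hδ : (0:ℝ) ≤ ‖e - f‖ := norm_nonneg _
  constructor
  · have := quasi_aux e (f - e)
    rw [add_sub_cancel] at this
    rw [norm_sub_rev f e] at this
    nlinarith [this, norm_nonneg e]
  · intro s hs
    obtain ⟨hs0, hs1⟩ := hs
    have heq : (1 - s) • e + s • f = e + s • (f - e) := by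
      rw [sub_smul, one_smul, smul_sub]; abel
    rw [heq]
    have hn : ‖s • (f - e)‖ = s * ‖e - f‖ := by
      rw [norm_smul, Real.norm_eq_abs, abs_of_nonneg hs0, norm_sub_rev]
    have key := quasi_aux e (s • (f - e))
    rw [hn] at key
    nlinarith [key, norm_nonneg e, mul_nonneg hs0 hδ,
      mul_nonneg (mul_nonneg (norm_nonneg e) (sub_nonneg.mpr hs1)) hδ,
      mul_nonneg (mul_nonneg hδ hδ) (sub_nonneg.mpr hs1),
      mul_nonneg hδ (sub_nonneg.mpr hs1),
      mul_nonneg (mul_nonneg (mul_nonneg hs0 hδ) hδ) (sub_nonneg.mpr hs1)]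
end

section
/- Let A be a unital C*-algebra, v ∈ A a unitary, and c, s ∈ A commuting positive contractions with c² + s² = 1; let r := √(cs) be the positive square root of cs. Suppose η ≥ 0 satisfies ‖cv − vc‖ ≤ η, ‖sv − vs‖ ≤ η and ‖rv − vr‖ ≤ η, and let ε be a real number with 0 < ε < (8/237)(√1393 − 34) and η < ε/2. Consider the 2×2 matrices over A: e := [[s², r v r],[r v* r, c²]] and ě := [[s², c s v],[c s v*, c²]]. Then: (1) e is self-adjoint and ‖e² − e‖ ≤ 2η < ε (so e is an ε-quasi-projection); (2) ‖e − ě‖ ≤ (√2/2)·η < (√2/4)·ε; (3) for every θ ∈ [0,1] the element (1−θ)·ě + θ·e satisfies ‖((1−θ)ě+θe)² − ((1−θ)ě+θe)‖ < 1/4 (so ě and e are homotopic via quasi-idempotents). -/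
/-! Write `e² - e` entrywise: using `r² = c s`, the commutation of `r` with `c, s` and
`c² + s² = 1`, every entry has the form `r x r` with `x` a commutator of `v` or `v*` with
`c s`, `s²` or `c²` (up to a unitary factor), hence of norm at most `‖r‖² · 2η ≤ η`, because
`‖r‖² = ‖c s‖ ≤ 1/2` (`1/2 - c s = (c - s)²/2 ≥ 0`). Likewise `e - ě` is off-diagonal with
entries `r [v, r]` and `r [v*, r]`. In `M₂(A)` the norm is at most the largest diagonal entry
plus the largest off-diagonal one: star homomorphisms of C⋆-algebras are contractive,
`Fin 2 → A` (sup norm) embeds diagonally, and an off-diagonal matrix is a diagonal one times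
the unitary swap. Finally, along the segment, `(e + t d)² - (e + t d)` differs from `e² - e`
by terms controlled by `‖d‖` and `‖e‖ ≤ 1 + ‖e² - e‖`, and the constraint on `ε` keeps the
total below `1/4`. -/

noncomputable instance Pi.cstarAlgebra {ι : Type*} [Fintype ι] {A : ι → Type*}
    [∀ i, CStarAlgebra (A i)] : CStarAlgebra (∀ i, A i) where

namespace Matrix

theorem sub_fin_two {A : Type*} [Sub A] (a b c d a' b' c' d' : A) :
    !![a, b; c, d] - !![a', b'; c', d'] = !![a - a', b - b'; c - c', d - d'] := by
  ext i j; fin_cases i <;> fin_cases j <;> rfl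

theorem star_fin_two {A : Type*} [Star A] (a b c d : A) :
    star !![a, b; c, d] = !![star a, star c; star b, star d] := by
  ext i j; fin_cases i <;> fin_cases j <;> rfl

def diagonalStarAlgHom (n R A : Type*) [Fintype n] [DecidableEq n] [CommSemiring R] [StarRing R]
    [Semiring A] [StarRing A] [Algebra R A] : (n → A) →⋆ₐ[R] Matrix n n A :=
  { diagonalAlgHom R with map_star' := fun d => (diagonal_conjTranspose d).symm }

variable {A B : Type*} [CStarAlgebra A] [CStarAlgebra B]
  (ι : Matrix (Fin 2) (Fin 2) A →⋆ₐ[ℂ] B)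

lemma norm_map_fin_two_diag_le (x y : A) : ‖ι !![x, 0; 0, y]‖ ≤ max ‖x‖ ‖y‖ := by
  have h : ‖ι (diagonal ![x, y])‖ ≤ ‖![x, y]‖ :=
    NonUnitalStarAlgHom.norm_apply_le (ι.comp (diagonalStarAlgHom (Fin 2) ℂ A)) ![x, y]
  rw [diagonal_fin_two] at h
  simpa [Pi.norm_def, Fin.univ_succ] using h

lemma norm_map_fin_two_antidiag_le (x y : A) : ‖ι !![0, x; y, 0]‖ ≤ max ‖x‖ ‖y‖ := by
  have hswap : !![(0 : A), 1; 1, 0] ∈ unitary (Matrix (Fin 2) (Fin 2) A) := by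
    rw [Unitary.mem_iff, star_fin_two, mul_fin_two]
    simp [one_fin_two]
  have hfactor : !![0, x; y, 0] = !![x, 0; 0, y] * !![(0 : A), 1; 1, 0] := by
    simp
  rw [hfactor, map_mul, CStarRing.norm_mul_mem_unitary _ (Unitary.map_mem ι hswap)]
  exact norm_map_fin_two_diag_le ι x y

lemma norm_map_fin_two_le (a b c d : A) :
    ‖ι !![a, b; c, d]‖ ≤ max ‖a‖ ‖d‖ + max ‖b‖ ‖c‖ := by
  have hsplit : !![a, b; c, d] = !![a, 0; 0, d] + !![0, b; c, 0] := by
    ext i j; fin_cases i <;> fin_cases j <;> simp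
  rw [hsplit, map_add]
  exact (norm_add_le _ _).trans
    (add_le_add (norm_map_fin_two_diag_le ι a d) (norm_map_fin_two_antidiag_le ι b c))

end Matrix

lemma norm_commutator_mul_le_two_mul {R : Type*} [NonUnitalSeminormedRing R] {a b x : R} {η : ℝ}
    (ha : ‖a‖ ≤ 1) (hb : ‖b‖ ≤ 1) (hax : ‖a * x - x * a‖ ≤ η)
    (hbx : ‖b * x - x * b‖ ≤ η) :
    ‖a * b * x - x * (a * b)‖ ≤ 2 * η := by
  have h : a * b * x - x * (a * b) = a * (b * x - x * b) + (a * x - x * a) * b := by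
    noncomm_ring
  have hη : 0 ≤ η := (norm_nonneg _).trans hax
  calc ‖a * b * x - x * (a * b)‖
        ≤ ‖a‖ * ‖b * x - x * b‖ + ‖a * x - x * a‖ * ‖b‖ := by
        rw [h]; exact (norm_add_le _ _).trans (add_le_add (norm_mul_le _ _) (norm_mul_le _ _))
    _ ≤ 1 * η + η * 1 := by gcongr
    _ = 2 * η := by ring

lemma norm_lineMap_sq_sub_self_le {R : Type*} [NormedRing R] [NormedAlgebra ℝ R] (x y : R)
    {θ : ℝ} (hθ : θ ∈ Set.Icc (0 : ℝ) 1) :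
    ‖((1 - θ) • y + θ • x) ^ 2 - ((1 - θ) • y + θ • x)‖
      ≤ ‖x ^ 2 - x‖ + (2 * ‖x‖ + 1) * ‖y - x‖ + ‖y - x‖ ^ 2 := by
  set t := 1 - θ
  set d := y - x
  have ht : ‖t‖ ≤ 1 := by
    rw [Real.norm_eq_abs, abs_le]; constructor <;> linarith [hθ.1, hθ.2]
  have hexpand : ((1 - θ) • y + θ • x) ^ 2 - ((1 - θ) • y + θ • x)
      = (x ^ 2 - x) + t • (x * d + d * x - d) + (t ^ 2) • (d * d) := by
    have : (1 - θ) • y + θ • x = x + t • d := by simp only [t, d]; module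
    rw [this]
    simp only [sq, mul_add, add_mul, smul_mul_assoc, mul_smul_comm]
    module
  have hmid : ‖x * d + d * x - d‖ ≤ (2 * ‖x‖ + 1) * ‖d‖ := by
    calc ‖x * d + d * x - d‖ ≤ ‖x‖ * ‖d‖ + ‖d‖ * ‖x‖ + ‖d‖ :=
          (norm_sub_le _ _).trans (add_le_add ((norm_add_le _ _).trans
            (add_le_add (norm_mul_le _ _) (norm_mul_le _ _))) le_rfl)
      _ = (2 * ‖x‖ + 1) * ‖d‖ := by ring
  rw [hexpand]
  refine (norm_add₃_le).trans (add_le_add_three le_rfl ?_ ?_)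
  · rw [norm_smul]
    exact (mul_le_of_le_one_left (norm_nonneg _) ht).trans hmid
  · rw [norm_smul, norm_pow, sq ‖d‖]
    exact (mul_le_of_le_one_left (norm_nonneg _) (pow_le_one₀ (norm_nonneg _) ht)).trans
      (norm_mul_le _ _)

section CStarRing

variable {E : Type*} [NormedRing E] [StarRing E] [CStarRing E]

lemma norm_le_one_add_norm_sq_sub_self {x : E} (hx : IsSelfAdjoint x) :
    ‖x‖ ≤ 1 + ‖x ^ 2 - x‖ := by
  have hsq : ‖x‖ ^ 2 ≤ ‖x ^ 2 - x‖ + ‖x‖ := by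
    rw [← hx.norm_mul_self, ← sq]
    simpa using norm_le_norm_sub_add (x ^ 2) x
  nlinarith [norm_nonneg x, norm_nonneg (x ^ 2 - x)]

variable {u x : E}

lemma norm_mul_mul_star_sub_of_mem_unitary (hu : u ∈ unitary E) :
    ‖u * x * star u - x‖ = ‖u * x - x * u‖ := by
  have h : u * x * star u - x = (u * x - x * u) * star u := by
    linear_combination (norm := noncomm_ring) x * Unitary.mul_star_self_of_mem hu
  rw [h, CStarRing.norm_mul_mem_unitary _ (Unitary.star_mem hu)]

lemma norm_star_mul_mul_sub_of_mem_unitary (hu : u ∈ unitary E) :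
    ‖star u * x * u - x‖ = ‖x * u - u * x‖ := by
  have h : star u * x * u - x = star u * (x * u - u * x) := by
    linear_combination (norm := noncomm_ring) Unitary.star_mul_self_of_mem hu * x
  rw [h, CStarRing.norm_mem_unitary_mul _ (Unitary.star_mem hu)]

lemma norm_mul_star_sub_star_mul_of_mem_unitary (hu : u ∈ unitary E) :
    ‖x * star u - star u * x‖ = ‖u * x - x * u‖ := by
  have h : x * star u - star u * x = star u * (u * x - x * u) * star u := by
    linear_combination (norm := noncomm_ring)
      -Unitary.star_mul_self_of_mem hu * (x * star u) + star u * x * Unitary.mul_star_self_of_mem hu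
  rw [h, CStarRing.norm_mul_mem_unitary _ (Unitary.star_mem hu),
    CStarRing.norm_mem_unitary_mul _ (Unitary.star_mem hu)]

end CStarRing

lemma segment_error_lt_quarter {η ε : ℝ} (hη : 0 ≤ η)
    (hε' : ε < 8 / 237 * (Real.sqrt 1393 - 34)) (hηε : η < ε / 2) :
    2 * η + (2 * (1 + 2 * η) + 1) * (Real.sqrt 2 / 2 * η) + (Real.sqrt 2 / 2 * η) ^ 2
      < 1 / 4 := by
  have hη' : η ≤ 57 / 1000 := by
    have : Real.sqrt 1393 < 37.33 := (Real.sqrt_lt' (by norm_num)).2 (by norm_num)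
    linarith
  have hsqrt2 : Real.sqrt 2 ≤ 1.415 := ((Real.sqrt_lt' (by norm_num)).2 (by norm_num)).le
  calc _ ≤ 2 * (57 / 1000 : ℝ) + (2 * (1 + 2 * (57 / 1000)) + 1) * (1.415 / 2 * (57 / 1000))
          + (1.415 / 2 * (57 / 1000)) ^ 2 := by gcongr
    _ < 1 / 4 := by norm_num

section CStarAlgebra

variable {A : Type*} [CStarAlgebra A] [PartialOrder A] [StarOrderedRing A]

lemma Commute.of_sq_of_nonneg {x r : A} (hr : 0 ≤ r) (h : Commute x (r ^ 2)) : Commute x r := by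
  rw [← CFC.sqrt_sq r, CFC.sqrt_eq_cfc]
  exact (h.symm.cfc_nnreal _).symm

lemma norm_mul_le_half_of_sq_add_sq_eq_one {c s : A} (hc : IsSelfAdjoint c)
    (hs : IsSelfAdjoint s) (hcomm : Commute c s) (hcs : c ^ 2 + s ^ 2 = 1) (hpos : 0 ≤ c * s) :
    ‖c * s‖ ≤ 1 / 2 := by
  rw [CStarAlgebra.norm_le_iff_le_algebraMap _ (by norm_num) hpos, ← sub_nonneg]
  have h : algebraMap ℝ A (1 / 2) - c * s = (1 / 2 : ℝ) • (star (c - s) * (c - s)) := by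
    have hsq : (c - s) * (c - s) = c ^ 2 + s ^ 2 - 2 • (c * s) := by
      linear_combination (norm := noncomm_ring) hcomm.eq
    rw [(hc.sub hs).star_eq, hsq, Algebra.algebraMap_eq_smul_one, ← hcs]
    module
  rw [h]
  exact smul_nonneg (by norm_num) (star_mul_self_nonneg _)

end CStarAlgebra

section QuasiProjection

variable {A : Type*} [Ring A] [StarRing A] {c s r v : A}

lemma isSelfAdjoint_quasiProjection (hc : IsSelfAdjoint c) (hs : IsSelfAdjoint s)
    (hr : IsSelfAdjoint r) :
    IsSelfAdjoint !![s ^ 2, r * v * r; r * star v * r, c ^ 2] := by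
  rw [IsSelfAdjoint, Matrix.star_fin_two, star_pow, star_pow, hc.star_eq, hs.star_eq]
  simp only [star_mul, star_star, hr.star_eq, mul_assoc]

lemma quasiProjection_sq_sub_self (hcs : c ^ 2 + s ^ 2 = 1) (hcomm : Commute c s)
    (hrc : Commute r c) (hrs : Commute r s) (hr2 : r ^ 2 = c * s) :
    !![s ^ 2, r * v * r; r * star v * r, c ^ 2] ^ 2 - !![s ^ 2, r * v * r; r * star v * r, c ^ 2]
      = !![r * (v * (c * s) * star v - c * s) * r, r * (s ^ 2 * v - v * s ^ 2) * r;
           r * (c ^ 2 * star v - star v * c ^ 2) * r, r * (star v * (c * s) * v - c * s) * r] := by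
  rw [sq r] at hr2
  have hr4 : r * (c * s) * r = c ^ 2 * s ^ 2 := by
    linear_combination (norm := noncomm_ring)
      -r * hr2 * r + hr2 * (r * r) + (c * s) * hr2 - c * hcomm.eq * s
  have h11 : s ^ 2 * s ^ 2 + r * v * r * (r * star v * r) - s ^ 2
      = r * (v * (c * s) * star v - c * s) * r := by
    linear_combination (norm := noncomm_ring) r * v * hr2 * star v * r + hcs * s ^ 2 + hr4
  have h12 : s ^ 2 * (r * v * r) + r * v * r * c ^ 2 - r * v * r
      = r * (s ^ 2 * v - v * s ^ 2) * r := by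
    linear_combination (norm := noncomm_ring)
      -s * hrs.eq * v * r - hrs.eq * s * v * r + r * v * hrc.eq * c + r * v * c * hrc.eq
        + r * v * hcs * r
  have h21 : r * star v * r * s ^ 2 + c ^ 2 * (r * star v * r) - r * star v * r
      = r * (c ^ 2 * star v - star v * c ^ 2) * r := by
    linear_combination (norm := noncomm_ring)
      -hrc.eq * c * star v * r - c * hrc.eq * star v * r + r * star v * hrs.eq * s
        + r * star v * s * hrs.eq + r * star v * hcs * r
  have h22 : r * star v * r * (r * v * r) + c ^ 2 * c ^ 2 - c ^ 2
      = r * (star v * (c * s) * v - c * s) * r := by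
    linear_combination (norm := noncomm_ring) r * star v * hr2 * v * r + c ^ 2 * hcs + hr4
  rw [sq, Matrix.mul_fin_two, Matrix.sub_fin_two, h11, h12, h21, h22]

lemma quasiProjection_sub (hr2 : r ^ 2 = c * s) :
    !![s ^ 2, r * v * r; r * star v * r, c ^ 2] - !![s ^ 2, c * s * v; c * s * star v, c ^ 2]
      = !![0, r * (v * r - r * v); r * (star v * r - r * star v), 0] := by
  rw [Matrix.sub_fin_two, ← hr2, sub_self, sub_self]
  congr <;> noncomm_ring

end QuasiProjection

section Estimates

variable {A B : Type*} [CStarAlgebra A] [CStarAlgebra B]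
  (ι : Matrix (Fin 2) (Fin 2) A →⋆ₐ[ℂ] B)
  {c s r v : A} {η : ℝ}

lemma norm_map_quasiProjection_sq_sub_self_le (hv : v ∈ unitary A) (hc1 : ‖c‖ ≤ 1)
    (hs1 : ‖s‖ ≤ 1) (hcs : c ^ 2 + s ^ 2 = 1) (hcomm : Commute c s) (hrc : Commute r c)
    (hrs : Commute r s) (hr2 : r ^ 2 = c * s) (hrn : ‖r‖ ^ 2 ≤ 1 / 2)
    (h1 : ‖c * v - v * c‖ ≤ η) (h2 : ‖s * v - v * s‖ ≤ η) :
    ‖ι (!![s ^ 2, r * v * r; r * star v * r, c ^ 2] ^ 2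
      - !![s ^ 2, r * v * r; r * star v * r, c ^ 2])‖ ≤ 2 * η := by
  have hsandwich (x : A) (hx : ‖x‖ ≤ 2 * η) : ‖r * x * r‖ ≤ η :=
    calc ‖r * x * r‖ ≤ ‖r‖ * ‖x‖ * ‖r‖ := norm_mul₃_le
      _ = ‖r‖ ^ 2 * ‖x‖ := by ring
      _ ≤ 1 / 2 * (2 * η) := by gcongr
      _ = η := by ring
  have hcs_comm : ‖c * s * v - v * (c * s)‖ ≤ 2 * η :=
    norm_commutator_mul_le_two_mul hc1 hs1 h1 h2
  have hssv : ‖s ^ 2 * v - v * s ^ 2‖ ≤ 2 * η := by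
    rw [sq]; exact norm_commutator_mul_le_two_mul hs1 hs1 h2 h2
  have hccv : ‖c ^ 2 * star v - star v * c ^ 2‖ ≤ 2 * η := by
    rw [norm_mul_star_sub_star_mul_of_mem_unitary hv, norm_sub_rev, sq]
    exact norm_commutator_mul_le_two_mul hc1 hc1 h1 h1
  have hconj : ‖v * (c * s) * star v - c * s‖ ≤ 2 * η := by
    rwa [norm_mul_mul_star_sub_of_mem_unitary hv, norm_sub_rev]
  have hconj_star : ‖star v * (c * s) * v - c * s‖ ≤ 2 * η := by
    rwa [norm_star_mul_mul_sub_of_mem_unitary hv]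
  rw [quasiProjection_sq_sub_self hcs hcomm hrc hrs hr2]
  refine (Matrix.norm_map_fin_two_le ι _ _ _ _).trans ?_
  linarith [max_le (hsandwich _ hconj) (hsandwich _ hconj_star),
    max_le (hsandwich _ hssv) (hsandwich _ hccv)]

lemma norm_map_quasiProjection_sub_le (hr2 : r ^ 2 = c * s) (hr : IsSelfAdjoint r)
    (h3 : ‖r * v - v * r‖ ≤ η) :
    ‖ι (!![s ^ 2, r * v * r; r * star v * r, c ^ 2]
      - !![s ^ 2, c * s * v; c * s * star v, c ^ 2])‖ ≤ ‖r‖ * η := by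
  have h3' : ‖star v * r - r * star v‖ ≤ η := by
    rwa [← norm_star, star_sub, star_mul, star_mul, star_star, hr.star_eq]
  rw [quasiProjection_sub hr2]
  refine (Matrix.norm_map_fin_two_antidiag_le ι _ _).trans (max_le ?_ ?_)
  · exact (norm_mul_le _ _).trans (by rw [norm_sub_rev]; gcongr)
  · exact (norm_mul_le _ _).trans (by gcongr)

end Estimates

theorem quasiProjection_representative_general
    {A B : Type*} [CStarAlgebra A] [PartialOrder A] [StarOrderedRing A] [CStarAlgebra B]
    (ι : Matrix (Fin 2) (Fin 2) A →⋆ₐ[ℂ] B)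
    (v : A) (hv : v ∈ unitary A)
    (c s r : A) (hc : 0 ≤ c) (hs : 0 ≤ s) (hc1 : ‖c‖ ≤ 1) (hs1 : ‖s‖ ≤ 1)
    (hcomm : c * s = s * c) (hcs : c ^ 2 + s ^ 2 = 1)
    (hr : 0 ≤ r) (hr2 : r ^ 2 = c * s)
    (η ε : ℝ) (hη : 0 ≤ η)
    (h1 : ‖c * v - v * c‖ ≤ η) (h2 : ‖s * v - v * s‖ ≤ η)
    (h3 : ‖r * v - v * r‖ ≤ η)
    (hε' : ε < 8 / 237 * (Real.sqrt 1393 - 34)) (hηε : η < ε / 2) :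
    let e : Matrix (Fin 2) (Fin 2) A := !![s ^ 2, r * v * r; r * star v * r, c ^ 2]
    let eCk : Matrix (Fin 2) (Fin 2) A := !![s ^ 2, c * s * v; c * s * star v, c ^ 2]
    (IsSelfAdjoint e ∧ ‖ι (e ^ 2 - e)‖ ≤ 2 * η ∧ 2 * η < ε) ∧
    (‖ι (e - eCk)‖ ≤ Real.sqrt 2 / 2 * η ∧
      Real.sqrt 2 / 2 * η < Real.sqrt 2 / 4 * ε) ∧
    ∀ θ : ℝ, θ ∈ Set.Icc (0 : ℝ) 1 →
      ‖ι (((1 - θ) • eCk + θ • e) ^ 2 - ((1 - θ) • eCk + θ • e))‖ < 1 / 4 := by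
  intro e eCk
  have hr' : IsSelfAdjoint r := .of_nonneg hr
  have hrc : Commute r c :=
    (Commute.of_sq_of_nonneg hr (hr2 ▸ (Commute.refl c).mul_right hcomm)).symm
  have hrs : Commute r s :=
    (Commute.of_sq_of_nonneg hr (hr2 ▸ (Commute.mul_right hcomm.symm (Commute.refl s)))).symm
  have hrn : ‖r‖ ^ 2 ≤ 1 / 2 := by
    rw [← hr'.norm_mul_self, ← sq, hr2]
    exact norm_mul_le_half_of_sq_add_sq_eq_one (.of_nonneg hc) (.of_nonneg hs) hcomm hcs
      (hr2 ▸ hr'.sq_nonneg)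
  have hrn' : ‖r‖ ≤ Real.sqrt 2 / 2 := by
    nlinarith [Real.sq_sqrt (zero_le_two : (0 : ℝ) ≤ 2), Real.sqrt_nonneg 2, norm_nonneg r]
  have he : IsSelfAdjoint e := isSelfAdjoint_quasiProjection (.of_nonneg hc) (.of_nonneg hs) hr'
  have hsq : ‖ι (e ^ 2 - e)‖ ≤ 2 * η :=
    norm_map_quasiProjection_sq_sub_self_le ι hv hc1 hs1 hcs hcomm hrc hrs hr2 hrn h1 h2
  have hdist : ‖ι (e - eCk)‖ ≤ Real.sqrt 2 / 2 * η :=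
    (norm_map_quasiProjection_sub_le ι hr2 hr' h3).trans (by gcongr)
  have hdist_lt : Real.sqrt 2 / 2 * η < Real.sqrt 2 / 4 * ε := by
    linarith [mul_lt_mul_of_pos_left hηε (by positivity : 0 < Real.sqrt 2 / 2)]
  refine ⟨⟨he, hsq, by linarith⟩, ⟨hdist, hdist_lt⟩, fun θ hθ => ?_⟩
  have hnorm : ‖ι e‖ ≤ 1 + 2 * η := by
    have := norm_le_one_add_norm_sq_sub_self (he.map ι)
    rw [← map_pow, ← map_sub] at this
    linarith
  rw [map_sub, map_pow, map_add, LinearMapClass.map_smul_of_tower ι,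
    LinearMapClass.map_smul_of_tower ι]
  rw [map_sub, map_pow] at hsq
  rw [map_sub, norm_sub_rev] at hdist
  calc _ ≤ _ := norm_lineMap_sq_sub_self_le (ι e) (ι eCk) hθ
    _ ≤ 2 * η + (2 * (1 + 2 * η) + 1) * (Real.sqrt 2 / 2 * η) + (Real.sqrt 2 / 2 * η) ^ 2 :=
        by gcongr
    _ < 1 / 4 := segment_error_lt_quarter hη hε' hηε

/-- Let `v` be a unitary in a unital C*-algebra `A`, let `c, s` be commuting
positive contractions with `c² + s² = 1`, and let `r` be the positive square root of `c·s`
(characterized by `0 ≤ r` and `r² = c·s`).  Suppose `η ≥ 0` bounds the commutators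
`‖cv − vc‖`, `‖sv − vs‖`, `‖rv − vr‖`, and `0 < ε < (8/237)(√1393 − 34)`, `η < ε/2`.
In `M₂(A)` (realized inside a C*-algebra `B` via an injective ⋆-algebra homomorphism `ι`,
which is automatically isometric, so `‖ι x‖` is the C*-norm of `x ∈ M₂(A)`), consider
`e := [[s², r v r],[r v* r, c²]]` and `ě := [[s², c s v],[c s v*, c²]]`.  Then:
(1) `e` is self-adjoint and `‖e² − e‖ ≤ 2η < ε` (so `e` is an `ε`-quasi-projection);
(2) `‖e − ě‖ ≤ (√2/2)η < (√2/4)ε`;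
(3) every point of the straight-line path from `ě` to `e` is a quasi-idempotent. -/
theorem quasiProjection_representative
    {A B : Type*} [CStarAlgebra A] [PartialOrder A] [StarOrderedRing A] [CStarAlgebra B]
    (ι : Matrix (Fin 2) (Fin 2) A →⋆ₐ[ℂ] B) (hι : Function.Injective ι)
    (v : A) (hv : v ∈ unitary A)
    (c s r : A) (hc : 0 ≤ c) (hs : 0 ≤ s) (hc1 : ‖c‖ ≤ 1) (hs1 : ‖s‖ ≤ 1)
    (hcomm : c * s = s * c) (hcs : c ^ 2 + s ^ 2 = 1)
    (hr : 0 ≤ r) (hr2 : r ^ 2 = c * s)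
    (η ε : ℝ) (hη : 0 ≤ η)
    (h1 : ‖c * v - v * c‖ ≤ η) (h2 : ‖s * v - v * s‖ ≤ η)
    (h3 : ‖r * v - v * r‖ ≤ η)
    (hε : 0 < ε) (hε' : ε < 8 / 237 * (Real.sqrt 1393 - 34)) (hηε : η < ε / 2) :
    let e : Matrix (Fin 2) (Fin 2) A := !![s ^ 2, r * v * r; r * star v * r, c ^ 2]
    let eCk : Matrix (Fin 2) (Fin 2) A := !![s ^ 2, c * s * v; c * s * star v, c ^ 2]
    (IsSelfAdjoint e ∧ ‖ι (e ^ 2 - e)‖ ≤ 2 * η ∧ 2 * η < ε) ∧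
    (‖ι (e - eCk)‖ ≤ Real.sqrt 2 / 2 * η ∧
      Real.sqrt 2 / 2 * η < Real.sqrt 2 / 4 * ε) ∧
    ∀ θ : ℝ, θ ∈ Set.Icc (0 : ℝ) 1 →
      ‖ι (((1 - θ) • eCk + θ • e) ^ 2 - ((1 - θ) • eCk + θ • e))‖ < 1 / 4 :=
  quasiProjection_representative_general ι v hv c s r hc hs hc1 hs1 hcomm hcs hr hr2 η ε hη h1 h2 h3
    hε' hηε
end

section
/- Let A be a unital C*-algebra, P ∈ A a projection (P = P* = P²), and e ∈ A an ε-quasi-projection. Set p := PeP, m := (1−P)eP, q := (1−P)e(1−P). Assume ‖q² − q‖ < ε_q for some ε_q with ε_q < 1/400 − ε. Then: (1) ‖m‖² < ε + ε_q; (2) p is a (2ε + ε_q)-quasi-projection, i.e. p is self-adjoint and ‖p² − p‖ < 2ε + ε_q; (3) for every s ∈ [0,1] the element p + q + s·(m + m*) is a quasi-projection; in particular e = p + q + m + m* is homotopic to the 'diagonal' p + q via quasi-projections. -/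
/-- **reduction to the diagonal.** Let `P` be a projection in a unital
C*-algebra `A` and `e` an `ε`-quasi-projection.  Put `p := PeP`, `m := (1−P)eP`,
`q := (1−P)e(1−P)` and suppose `‖q² − q‖ < ε_q` with `ε_q < 1/400 − ε`.  Then:
(1) `‖m‖² < ε + ε_q`; (2) `p` is a `(2ε + ε_q)`-quasi-projection; (3) every point of the
straight-line path `s ↦ p + q + s(m + m*)` is a quasi-projection; in particular
`e = p + q + m + m*` is homotopic to the diagonal `p + q` via quasi-projections. -/
theorem reduction_to_diagonal {A : Type*} [CStarAlgebra A]
    (P e : A) (hP : IsSelfAdjoint P) (hP2 : P ^ 2 = P)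
    (ε εq : ℝ) (hε : 0 < ε)
    (he : IsSelfAdjoint e) (he2 : ‖e ^ 2 - e‖ < ε)
    (hq : ‖((1 - P) * e * (1 - P)) ^ 2 - (1 - P) * e * (1 - P)‖ < εq)
    (hεq : εq < 1 / 400 - ε) :
    let p := P * e * P
    let m := (1 - P) * e * P
    let q := (1 - P) * e * (1 - P)
    ‖m‖ ^ 2 < ε + εq ∧
    (IsSelfAdjoint p ∧ ‖p ^ 2 - p‖ < 2 * ε + εq) ∧
    (∀ s : ℝ, s ∈ Set.Icc (0 : ℝ) 1 →
      IsSelfAdjoint (p + q + s • (m + star m)) ∧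
      ‖(p + q + s • (m + star m)) ^ 2 - (p + q + s • (m + star m))‖ < 1 / 4) ∧
    e = p + q + m + star m := by
  intro p m q
  have hP2' : P * P = P := by rw [← sq, hP2]
  have h : ∀ y : A, P * (P * y) = P * y := fun y => by rw [← mul_assoc, hP2']
  have hεq0 : 0 < εq := lt_of_le_of_lt (norm_nonneg _) hq
  -- star m = P e (1-P)
  have hsm : star m = P * e * (1 - P) := by
    simp only [m, star_mul, star_sub, star_one, hP.star_eq, he.star_eq, mul_assoc]
  -- norms of P and 1-P are ≤ 1
  have hnormP : ‖P‖ ≤ 1 := by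
    by_cases h0 : ‖P‖ = 0
    · simp [h0]
    · have := CStarRing.norm_star_mul_self (x := P)
      rw [hP.star_eq, hP2'] at this
      nlinarith [norm_nonneg P]
  have hQsa : IsSelfAdjoint (1 - P) := by
    show star (1 - P) = 1 - P
    rw [star_sub, star_one, hP.star_eq]
  have hQ2 : (1 - P) * (1 - P) = 1 - P := by
    simp only [sub_mul, mul_sub, one_mul, mul_one, hP2']; abel
  have hnormQ : ‖(1 : A) - P‖ ≤ 1 := by
    by_cases h0 : ‖(1 : A) - P‖ = 0
    · simp [h0]
    · have := CStarRing.norm_star_mul_self (x := (1 : A) - P)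
      rw [hQsa.star_eq, hQ2] at this
      nlinarith [norm_nonneg ((1 : A) - P)]
  -- cutting down by P / 1-P does not increase norms
  have cut : ∀ (X Y a : A), ‖X‖ ≤ 1 → ‖Y‖ ≤ 1 → ‖X * a * Y‖ ≤ ‖a‖ := by
    intro X Y a hX hY
    calc ‖X * a * Y‖ ≤ ‖X * a‖ * ‖Y‖ := norm_mul_le _ _
      _ ≤ ‖X‖ * ‖a‖ * ‖Y‖ := by
          gcongr
          exact norm_mul_le _ _
      _ ≤ 1 * ‖a‖ * 1 := by gcongr <;> positivity
      _ = ‖a‖ := by ring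
  have hee : ∀ (X Y : A), ‖X‖ ≤ 1 → ‖Y‖ ≤ 1 → ‖X * (e * e - e) * Y‖ < ε := by
    intro X Y hX hY
    refine lt_of_le_of_lt (cut X Y _ hX hY) ?_
    rwa [← sq]
  -- (1) : ‖m‖² < ε + εq
  have hqq : ‖q * q - q‖ < εq := by rwa [← sq]
  have hmm' : m * star m = (1 - P) * (e * e - e) * (1 - P) - (q * q - q) := by
    rw [hsm]
    simp only [q, m, sub_mul, mul_sub, add_mul, mul_add, one_mul, mul_one, mul_assoc, h, hP2']
    abel
  have h1 : ‖m‖ ^ 2 < ε + εq := by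
    calc ‖m‖ ^ 2 = ‖m * star m‖ := by rw [CStarRing.norm_self_mul_star, sq]
      _ ≤ ‖(1 - P) * (e * e - e) * (1 - P)‖ + ‖q * q - q‖ := by
          rw [hmm']; exact norm_sub_le _ _
      _ < ε + εq := add_lt_add (hee _ _ hnormQ hnormQ) hqq
  -- (2) : p is a (2ε+εq)-quasi-projection
  have hpsa : IsSelfAdjoint p := by
    show star (P * e * P) = P * e * P
    simp only [star_mul, hP.star_eq, he.star_eq, mul_assoc]
  have hpp : p * p - p = P * (e * e - e) * P - star m * m := by
    rw [hsm]
    simp only [p, m, sub_mul, mul_sub, add_mul, mul_add, one_mul, mul_one, mul_assoc, h, hP2']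
    abel
  have hsmm : ‖star m * m‖ = ‖m‖ ^ 2 := by rw [CStarRing.norm_star_mul_self, sq]
  have h2 : ‖p ^ 2 - p‖ < 2 * ε + εq := by
    rw [sq]
    calc ‖p * p - p‖ ≤ ‖P * (e * e - e) * P‖ + ‖star m * m‖ := by
          rw [hpp]; exact norm_sub_le _ _
      _ < ε + (ε + εq) := by
          refine add_lt_add (hee _ _ hnormP hnormP) ?_
          rwa [hsmm]
      _ = 2 * ε + εq := by ring
  refine ⟨h1, ⟨hpsa, h2⟩, ?_, ?_⟩
  · -- (3) : the path consists of quasi-projections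
    intro s hs
    obtain ⟨hs0, hs1⟩ := hs
    have hqsa : IsSelfAdjoint q := by
      show star ((1 - P) * e * (1 - P)) = (1 - P) * e * (1 - P)
      simp only [star_mul, hQsa.star_eq, he.star_eq, mul_assoc]
    have hdsa : IsSelfAdjoint (m + star m) := by
      show star (m + star m) = m + star m
      rw [star_add, star_star, add_comm]
    have hxsa : IsSelfAdjoint (p + q + s • (m + star m)) := by
      show star _ = _
      rw [star_add, star_add, star_smul, hpsa.star_eq, hqsa.star_eq, hdsa.star_eq,
        star_trivial]
    refine ⟨hxsa, ?_⟩
    have key : (p + q + s • (m + star m)) ^ 2 - (p + q + s • (m + star m))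
        = (p * p - p) + (q * q - q)
          + (s * s) • (m * star m + star m * m)
          + s • ((1 - P) * (e * e - e) * P) + s • (P * (e * e - e) * (1 - P)) := by
      rw [hsm]
      simp only [p, q, m, sq, sub_mul, mul_sub, add_mul, mul_add, one_mul, mul_one,
        mul_assoc, h, hP2', smul_mul_assoc, mul_smul_comm, smul_smul, smul_add, smul_sub]
      module
    have hnmm : ‖m * star m‖ = ‖m‖ ^ 2 := by rw [CStarRing.norm_self_mul_star, sq]
    have hss : |s * s| ≤ 1 := by rw [abs_of_nonneg (by positivity)]; nlinarith
    have habs : |s| ≤ 1 := by rwa [abs_of_nonneg hs0]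
    calc ‖(p + q + s • (m + star m)) ^ 2 - (p + q + s • (m + star m))‖
        ≤ ‖(p * p - p) + (q * q - q) + (s * s) • (m * star m + star m * m)
            + s • ((1 - P) * (e * e - e) * P)‖ + ‖s • (P * (e * e - e) * (1 - P))‖ := by
          rw [key]; exact norm_add_le _ _
      _ ≤ (‖(p * p - p) + (q * q - q) + (s * s) • (m * star m + star m * m)‖
            + ‖s • ((1 - P) * (e * e - e) * P)‖) + ‖s • (P * (e * e - e) * (1 - P))‖ := by
          gcongr; exact norm_add_le _ _
      _ ≤ ((‖p * p - p‖ + ‖q * q - q‖ + ‖(s * s) • (m * star m + star m * m)‖)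
            + ‖s • ((1 - P) * (e * e - e) * P)‖) + ‖s • (P * (e * e - e) * (1 - P))‖ := by
          gcongr
          exact le_trans (norm_add_le _ _) (by gcongr; exact norm_add_le _ _)
      _ ≤ ((‖p * p - p‖ + ‖q * q - q‖ + (‖m * star m‖ + ‖star m * m‖))
            + ‖(1 - P) * (e * e - e) * P‖) + ‖P * (e * e - e) * (1 - P)‖ := by
          simp only [norm_smul, Real.norm_eq_abs]
          gcongr
          · exact le_trans (mul_le_mul_of_nonneg_right hss (norm_nonneg _))
              (by rw [one_mul]; exact norm_add_le _ _)
          · exact le_trans (mul_le_mul_of_nonneg_right habs (norm_nonneg _)) (by rw [one_mul])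
          · exact le_trans (mul_le_mul_of_nonneg_right habs (norm_nonneg _)) (by rw [one_mul])
      _ < ((2 * ε + εq) + εq + ((ε + εq) + (ε + εq))) + ε + ε := by
          have h2' : ‖p * p - p‖ < 2 * ε + εq := by rwa [sq] at h2
          have := hee _ _ hnormQ hnormP
          have := hee _ _ hnormP hnormQ
          rw [hnmm, hsmm]
          gcongr <;> assumption
      _ ≤ 1 / 4 := by linarith
  · -- e = p + q + m + m*
    rw [hsm]
    show e = P * e * P + (1 - P) * e * (1 - P) + (1 - P) * e * P + P * e * (1 - P)
    noncomm_ring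
end

section
/- Let A be a unital C*-algebra, v ∈ A a unitary, and c, s ∈ A commuting positive elements with c² + s² = 1; let r := √(cs) be the positive square root of cs. In the C*-algebra M₂(A) of 2×2 matrices over A, set e := [[s², r v r],[r v* r, c²]], f := [[0,0],[0,1]], and Θ := [[c, s],[−s, c]]. Then Θ is a unitary in M₂(A), Θ f Θ* = [[s², c s],[c s, c²]], and ‖e − Θ f Θ*‖ ≤ 2‖c s‖. -/
set_option maxHeartbeats 1000000 in
/-- Let `v` be a unitary in a unital C*-algebra `A`, let `c, s` be commuting
positive elements with `c² + s² = 1`, and let `r` be the positive square root of `c·s`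
(characterized by `0 ≤ r` and `r² = c·s`).  In `M₂(A)` (realized inside a C*-algebra `B`
via an injective ⋆-algebra homomorphism `ι`, which is automatically isometric, so `‖ι x‖`
is the C*-norm of `x ∈ M₂(A)`), set `e := [[s², r v r],[r v* r, c²]]`, `f := [[0,0],[0,1]]`
and `Θ := [[c, s],[−s, c]]`.  Then `Θ` is a unitary in `M₂(A)`,
`Θ f Θ* = [[s², c s],[c s, c²]]`, and `‖e − Θ f Θ*‖ ≤ 2‖c s‖`. -/
theorem upper_corner_estimate
    {A B : Type*} [CStarAlgebra A] [PartialOrder A] [StarOrderedRing A] [CStarAlgebra B]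
    (ι : Matrix (Fin 2) (Fin 2) A →⋆ₐ[ℂ] B) (hι : Function.Injective ι)
    (v : A) (hv : v ∈ unitary A)
    (c s r : A) (hc : 0 ≤ c) (hs : 0 ≤ s)
    (hcomm : c * s = s * c) (hcs : c ^ 2 + s ^ 2 = 1)
    (hr : 0 ≤ r) (hr2 : r ^ 2 = c * s) :
    let e : Matrix (Fin 2) (Fin 2) A := !![s ^ 2, r * v * r; r * star v * r, c ^ 2]
    let f : Matrix (Fin 2) (Fin 2) A := !![0, 0; 0, 1]
    let Θ : Matrix (Fin 2) (Fin 2) A := !![c, s; -s, c]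
    Θ ∈ unitary (Matrix (Fin 2) (Fin 2) A) ∧
    Θ * f * star Θ = !![s ^ 2, c * s; c * s, c ^ 2] ∧
    ‖ι (e - Θ * f * star Θ)‖ ≤ 2 * ‖c * s‖ := by
  intro e f Θ
  have hcself : IsSelfAdjoint c := .of_nonneg hc
  have hsself : IsSelfAdjoint s := .of_nonneg hs
  have hrself : IsSelfAdjoint r := .of_nonneg hr
  have hcs2 : c * c + s * s = 1 := by simpa [pow_two] using hcs
  have hsc2 : s * s + c * c = 1 := by rw [add_comm]; exact hcs2
  have hΘ : Θ ∈ unitary (Matrix (Fin 2) (Fin 2) A) := by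
    rw [Unitary.mem_iff]
    constructor <;>
    · ext i j
      fin_cases i <;> fin_cases j <;>
        simp [Θ, Matrix.mul_apply, Fin.sum_univ_two, Matrix.one_apply,
          hcself.star_eq, hsself.star_eq, hcomm, hcs2, hsc2]
  have hconj : Θ * f * star Θ = !![s ^ 2, c * s; c * s, c ^ 2] := by
    ext i j
    fin_cases i <;> fin_cases j <;>
      simp [Θ, f, Matrix.mul_apply, Fin.sum_univ_two,
        hcself.star_eq, hsself.star_eq, hcomm, pow_two]
  refine ⟨hΘ, hconj, ?_⟩
  rcases subsingleton_or_nontrivial B with hB | hB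
  · have : ι (e - Θ * f * star Θ) = 0 := Subsingleton.elim _ _
    rw [this, norm_zero]
    positivity
  -- the diagonal embedding composed with ι
  let δ : A →⋆ₙₐ[ℂ] B :=
  { toFun := fun x => ι (Matrix.diagonal fun _ => x)
    map_smul' := fun m x =>
      (congrArg ι (by
        ext i j
        rcases eq_or_ne i j with h | h <;>
          simp [Matrix.diagonal_apply, h])).trans (map_smul ι m _)
    map_zero' := by simp
    map_add' := fun x y =>
      (congrArg ι (by
        ext i j
        rcases eq_or_ne i j with h | h <;>
          simp [Matrix.diagonal_apply, h])).trans (map_add ι _ _)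
    map_mul' := fun x y =>
      (congrArg ι (Matrix.diagonal_mul_diagonal _ _).symm).trans (map_mul ι _ _)
    map_star' := fun x =>
      (congrArg ι (by
        ext i j
        rcases eq_or_ne i j with h | h
        · subst h; simp [Matrix.diagonal_apply, Matrix.star_apply]
        · simp [Matrix.diagonal_apply, Matrix.star_apply, h, h.symm])).trans
        (map_star ι _) }
  have hδ : ∀ x : A, ‖δ x‖ ≤ ‖x‖ := fun x => NonUnitalStarAlgHom.norm_apply_le δ x
  have hv' := Unitary.mem_iff.mp hv
  have hVmem : (!![0, v; star v, 0] : Matrix (Fin 2) (Fin 2) A)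
      ∈ unitary (Matrix (Fin 2) (Fin 2) A) := by
    rw [Unitary.mem_iff]
    constructor <;>
    · ext i j
      fin_cases i <;> fin_cases j <;>
        simp [Matrix.mul_apply, Fin.sum_univ_two, Matrix.one_apply, hv'.1, hv'.2]
  have hUmem : (!![0, 1; 1, 0] : Matrix (Fin 2) (Fin 2) A)
      ∈ unitary (Matrix (Fin 2) (Fin 2) A) := by
    rw [Unitary.mem_iff]
    constructor <;>
    · ext i j
      fin_cases i <;> fin_cases j <;>
        simp [Matrix.mul_apply, Fin.sum_univ_two, Matrix.one_apply]
  have hιV : ι !![0, v; star v, 0] ∈ unitary B := by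
    rw [Unitary.mem_iff] at hVmem ⊢
    refine ⟨?_, ?_⟩ <;> rw [← map_star, ← map_mul, ← map_one ι]
    · rw [hVmem.1]
    · rw [hVmem.2]
  have hιU : ι !![0, 1; 1, 0] ∈ unitary B := by
    rw [Unitary.mem_iff] at hUmem ⊢
    refine ⟨?_, ?_⟩ <;> rw [← map_star, ← map_mul, ← map_one ι]
    · rw [hUmem.1]
    · rw [hUmem.2]
  have hnV : ‖ι !![0, v; star v, 0]‖ = 1 := CStarRing.norm_of_mem_unitary hιV
  have hnU : ‖ι !![0, 1; 1, 0]‖ = 1 := CStarRing.norm_of_mem_unitary hιU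
  -- key decomposition
  have hdecomp : e - Θ * f * star Θ =
      (Matrix.diagonal fun _ => r) * !![0, v; star v, 0] * (Matrix.diagonal fun _ => r)
        - (Matrix.diagonal fun _ => c * s) * !![0, 1; 1, 0] := by
    rw [hconj]
    ext i j
    fin_cases i <;> fin_cases j <;>
      simp [e, Matrix.mul_apply, Fin.sum_univ_two, Matrix.diagonal_apply]
  have hrr : ‖r‖ * ‖r‖ = ‖c * s‖ := by
    rw [← CStarRing.norm_star_mul_self (x := r), hrself.star_eq, ← pow_two, hr2]
  calc ‖ι (e - Θ * f * star Θ)‖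
      = ‖δ r * ι !![0, v; star v, 0] * δ r - δ (c * s) * ι !![0, 1; 1, 0]‖ := by
        rw [hdecomp, map_sub, map_mul, map_mul, map_mul]
        rfl
    _ ≤ ‖δ r * ι !![0, v; star v, 0] * δ r‖ + ‖δ (c * s) * ι !![0, 1; 1, 0]‖ :=
        norm_sub_le _ _
    _ ≤ ‖δ r‖ * ‖ι !![0, v; star v, 0]‖ * ‖δ r‖ + ‖δ (c * s)‖ * ‖ι !![0, 1; 1, 0]‖ := by
        gcongr <;> first | exact norm_mul_le _ _ |
          exact (norm_mul_le _ _).trans (by gcongr; exact norm_mul_le _ _)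
    _ ≤ ‖r‖ * 1 * ‖r‖ + ‖c * s‖ * 1 := by
        rw [hnV, hnU]
        gcongr
        exacts [hδ r, hδ r, hδ (c * s)]
    _ = 2 * ‖c * s‖ := by rw [mul_one, mul_one, hrr]; ring
end

section
/- Let A be a unital C*-algebra, D ∈ A self-adjoint, a ∈ A, and t ≥ 1. Let u_t := cfc(fun x => π/2 + arctan(x/t)) D be given by the continuous functional calculus. Then ‖u_t·a − a·u_t‖ ≤ t⁻¹·‖D·a − a·D‖. -/
/-!
For `t > 0` one has `arctan (x / t) = ∫ u in 0..t⁻¹, x / (1 + (u * x) ^ 2)`, and the functional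
calculus commutes with this integral, so `[u_t, a]` is the integral over `u ∈ [0, t⁻¹]` of the
commutators `[D R_u, a]`, where `R_u = (1 + u² D²)⁻¹`. Each of these has norm at most `‖[D, a]‖`:
with `b = [D, a]` and `E = u D` one has `[D R_u, a] = R_u (b - E b E) R_u`, and
`2 R_u (b - E b E) R_u = v b v + v⋆ b v⋆` for `v = R_u (1 + i E)`, which is a contraction because
`v⋆ v = R_u`. Integrating over an interval of length `t⁻¹` gives the bound.
-/

open Real MeasureTheory

lemma arctan_mul_eq_intervalIntegral (T x : ℝ) :
    arctan (T * x) = ∫ u in 0..T, x / (1 + (u * x) ^ 2) := by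
  have hderiv (u : ℝ) : HasDerivAt (fun u => arctan (u * x)) (x / (1 + (u * x) ^ 2)) u := by
    convert (hasDerivAt_mul_const x).arctan using 1
    rw [one_div, div_eq_inv_mul]
  have hcont : Continuous fun u : ℝ => x / (1 + (u * x) ^ 2) :=
    Continuous.div (by fun_prop) (by fun_prop) fun u => by positivity
  rw [intervalIntegral.integral_eq_sub_of_hasDerivAt (fun u _ => hderiv u)
    (hcont.intervalIntegrable 0 T), zero_mul, arctan_zero, sub_zero]

lemma continuous_uncurry_div_one_add_sq :
    Continuous (Function.uncurry fun u x : ℝ => x / (1 + (u * x) ^ 2)) :=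
  Continuous.div (by fun_prop) (by fun_prop) fun _ => by positivity

lemma norm_div_one_add_sq_le (u x : ℝ) : ‖x / (1 + (u * x) ^ 2)‖ ≤ ‖x‖ := by
  rw [norm_div, Real.norm_of_nonneg (by positivity : (0 : ℝ) ≤ 1 + (u * x) ^ 2)]
  exact div_le_self (norm_nonneg x) (le_add_of_nonneg_right (sq_nonneg _))

lemma algebraMap_add_mul_sub_mul_add {R A : Type*} [CommSemiring R] [Ring A] [Algebra R A]
    (r : R) (x a : A) :
    (algebraMap R A r + x) * a - a * (algebraMap R A r + x) = x * a - a * x := by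
  rw [add_mul, mul_add, Algebra.commutes]
  abel

lemma commutator_mul_eq_of_mul_one_add_mul_self_eq_one {A : Type*} [Ring A] [Algebra ℝ A]
    {D R : A} (a : A) (u : ℝ) (hDR : Commute D R) (hR : R * (1 + (u • D) * (u • D)) = 1) :
    D * R * a - a * (D * R) =
      R * ((D * a - a * D) - (u • D) * (D * a - a * D) * (u • D)) * R := by
  set T := 1 + (u • D) * (u • D) with hT
  have hTR : T * R = 1 := by
    rw [← hR]
    exact ((Commute.one_left R).add_left ((hDR.smul_left u).mul_left (hDR.smul_left u))).eq
  have hT_comm : (D * a - a * D) - (u • D) * (D * a - a * D) * (u • D) =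
      D * a * T - T * a * D := by
    simp only [hT, mul_add, add_mul, mul_sub, sub_mul, smul_mul_assoc, mul_smul_comm, smul_sub,
      mul_one, one_mul, mul_assoc]
    abel
  calc D * R * a - a * (D * R) = R * D * a * (T * R) - (R * T) * a * D * R := by
        rw [hTR, hR, ← hDR.eq]; noncomm_ring
    _ = _ := by rw [hT_comm]; noncomm_ring

lemma IntervalIntegrable.integral_mul_sub_mul {A : Type*} [NormedRing A] [NormedAlgebra ℝ A]
    [CompleteSpace A] {f : ℝ → A} {α β : ℝ} (hf : IntervalIntegrable f volume α β) (a : A) :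
    ∫ u in α..β, (f u * a - a * f u) = (∫ u in α..β, f u) * a - a * ∫ u in α..β, f u :=
  ((ContinuousLinearMap.mul ℝ A).flip a - ContinuousLinearMap.mul ℝ A a).intervalIntegral_comp_comm
    hf

section CStarAlgebra

variable {A : Type*} [CStarAlgebra A]

lemma norm_mul_sub_mul_mul_mul_le {E R : A} (hE : IsSelfAdjoint E) (hR : IsSelfAdjoint R)
    (hER : Commute E R) (hR_inv : R * (1 + E * E) = 1) (hR_norm : ‖R‖ ≤ 1) (b : A) :
    ‖R * (b - E * b * E) * R‖ ≤ ‖b‖ := by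
  set z : A := Complex.I • E
  have hzcz (c : A) : z * c * z = -(E * c * E) := by
    simp only [z, smul_mul_assoc, mul_smul_comm, smul_smul, Complex.I_mul_I, neg_one_smul]
  have hRz : Commute R z := hER.symm.smul_right _
  have hR_add : R * (1 + z) = (1 + z) * R := ((Commute.one_right R).add_right hRz).eq
  have hR_sub : R * (1 - z) = (1 - z) * R := ((Commute.one_right R).sub_right hRz).eq
  obtain ⟨v, hv⟩ : ∃ v : A, v = R * (1 + z) := ⟨_, rfl⟩
  have hv_star : star v = R * (1 - z) := by
    have hz_star : star z = -z := by simp [z, star_smul, hE.star_eq]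
    rw [hv, star_mul, hR.star_eq, star_add, star_one, hz_star, ← sub_eq_add_neg, hR_sub]
  have hv_norm : ‖v‖ ≤ 1 := by
    have hvv : star v * v = R :=
      calc star v * v = R * (1 - z * 1 * z) * R := by rw [hv_star, hv, hR_add]; noncomm_ring
        _ = R := by rw [hzcz, mul_one, sub_neg_eq_add, hR_inv, one_mul]
    have h := CStarRing.norm_star_mul_self (x := v)
    rw [hvv] at h
    nlinarith [norm_nonneg v]
  have hsum : R * (b - E * b * E) * R + R * (b - E * b * E) * R =
      v * b * v + star v * b * star v :=
    calc _ = R * (1 + z) * b * ((1 + z) * R) + R * (1 - z) * b * ((1 - z) * R) := by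
          rw [sub_eq_add_neg b, ← hzcz]; noncomm_ring
      _ = _ := by rw [← hR_add, ← hR_sub, hv_star, hv]
  have hsandwich {w : A} (hw : ‖w‖ ≤ 1) : ‖w * b * w‖ ≤ ‖b‖ :=
    calc ‖w * b * w‖ ≤ ‖w‖ * ‖b‖ * ‖w‖ := norm_mul₃_le
      _ ≤ 1 * ‖b‖ * 1 := by gcongr
      _ = ‖b‖ := by ring
  have h := (norm_add_le _ _).trans
    (add_le_add (hsandwich hv_norm) (hsandwich ((norm_star v).trans_le hv_norm)))
  rw [← hsum, ← two_smul ℝ, norm_smul, Real.norm_two] at h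
  linarith

lemma IsSelfAdjoint.norm_commutator_cfc_div_one_add_sq_le {D : A} (hD : IsSelfAdjoint D)
    (a : A) (u : ℝ) :
    ‖cfc (fun x : ℝ => x / (1 + (u * x) ^ 2)) D * a -
      a * cfc (fun x : ℝ => x / (1 + (u * x) ^ 2)) D‖ ≤ ‖D * a - a * D‖ := by
  have hpos (x : ℝ) : 0 < 1 + (u * x) ^ 2 := by positivity
  have hR_cont : Continuous fun x : ℝ => (1 + (u * x) ^ 2)⁻¹ :=
    Continuous.inv₀ (by fun_prop) fun x => (hpos x).ne'
  set R := cfc (fun x : ℝ => (1 + (u * x) ^ 2)⁻¹) D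
  have hDR : Commute D R := by
    simpa only [cfc_id' ℝ D] using
      cfc_commute_cfc (fun x : ℝ => x) (fun x => (1 + (u * x) ^ 2)⁻¹) D
  have hR_inv : R * (1 + (u • D) * (u • D)) = 1 :=
    calc R * (1 + (u • D) * (u • D)) =
          cfc (fun x : ℝ => (1 + (u * x) ^ 2)⁻¹ * (1 + (u * x) ^ 2)) D := by
          rw [cfc_mul _ _ D hR_cont.continuousOn, cfc_const_add 1 _ D, cfc_pow _ 2 D,
            cfc_const_mul u _ D, cfc_id' ℝ D, map_one, sq]
      _ = 1 := by rw [cfc_congr fun x _ => inv_mul_cancel₀ (hpos x).ne', cfc_const_one ℝ D]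
  have hR_norm : ‖R‖ ≤ 1 := by
    refine norm_cfc_le zero_le_one fun x _ => ?_
    rw [norm_inv, Real.norm_of_nonneg (hpos x).le]
    exact inv_le_one_of_one_le₀ (le_add_of_nonneg_right (sq_nonneg _))
  have hDR_eq : cfc (fun x : ℝ => x / (1 + (u * x) ^ 2)) D = D * R :=
    calc _ = cfc (fun x : ℝ => x * (1 + (u * x) ^ 2)⁻¹) D := by simp_rw [div_eq_mul_inv]
      _ = D * R := by
          rw [cfc_mul (fun x : ℝ => x) _ D (by fun_prop) hR_cont.continuousOn, cfc_id' ℝ D]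
  rw [hDR_eq, commutator_mul_eq_of_mul_one_add_mul_self_eq_one a u hDR hR_inv]
  exact norm_mul_sub_mul_mul_mul_le ((IsSelfAdjoint.all u).smul hD) (cfc_predicate _ D)
    (hDR.smul_left u) hR_inv hR_norm _

lemma IsSelfAdjoint.intervalIntegrable_cfc_div_one_add_sq {D : A} (hD : IsSelfAdjoint D)
    {T : ℝ} (hT : 0 ≤ T) :
    IntervalIntegrable (fun u : ℝ => cfc (fun x : ℝ => x / (1 + (u * x) ^ 2)) D) volume 0 T :=
  (intervalIntegrable_iff_integrableOn_Ioc_of_le hT).2 <|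
    integrableOn_cfc measurableSet_Ioc _ (fun _ => ‖D‖ * ‖(1 : A)‖) D
      continuous_uncurry_div_one_add_sq.continuousOn
      (.of_forall fun u x hx =>
        (norm_div_one_add_sq_le u x).trans (spectrum.norm_le_norm_mul_of_mem hx))
      (hasFiniteIntegral_const _)

lemma IsSelfAdjoint.cfc_arctan_mul_eq_intervalIntegral {D : A} (hD : IsSelfAdjoint D)
    {T : ℝ} (hT : 0 ≤ T) :
    cfc (fun x : ℝ => arctan (T * x)) D =
      ∫ u in 0..T, cfc (fun x : ℝ => x / (1 + (u * x) ^ 2)) D := by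
  simp_rw [arctan_mul_eq_intervalIntegral T, intervalIntegral.integral_of_le hT]
  exact cfc_setIntegral measurableSet_Ioc _ (fun _ => ‖D‖ * ‖(1 : A)‖) D
    continuous_uncurry_div_one_add_sq.continuousOn
    (.of_forall fun u x hx =>
      (norm_div_one_add_sq_le u x).trans (spectrum.norm_le_norm_mul_of_mem hx))
    (hasFiniteIntegral_const _)

end CStarAlgebra

/-- Let `D` be a self-adjoint element of a unital C*-algebra `A`, `a ∈ A`
and `t ≥ 1`.  With `u_t := (π/2 + arctan(·/t))(D)` given by the continuous functional
calculus, one has `‖[u_t, a]‖ ≤ t⁻¹ ‖[D, a]‖`. -/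
theorem commutator_ut {A : Type*} [CStarAlgebra A] (D a : A) (hD : IsSelfAdjoint D)
    (t : ℝ) (ht : 1 ≤ t) :
    ‖cfc (fun x : ℝ => π / 2 + Real.arctan (x / t)) D * a -
      a * cfc (fun x : ℝ => π / 2 + Real.arctan (x / t)) D‖ ≤
      t⁻¹ * ‖D * a - a * D‖ := by
  have ht₀ : 0 ≤ t⁻¹ := inv_nonneg.2 (zero_le_one.trans ht)
  have hsplit : cfc (fun x : ℝ => π / 2 + arctan (x / t)) D =
      algebraMap ℝ A (π / 2) + ∫ u in 0..t⁻¹, cfc (fun x : ℝ => x / (1 + (u * x) ^ 2)) D := by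
    have harctan : (fun x : ℝ => arctan (x / t)) = fun x => arctan (t⁻¹ * x) :=
      funext fun x => by rw [div_eq_inv_mul]
    rw [cfc_const_add (π / 2) (fun x : ℝ => arctan (x / t)) D, harctan,
      hD.cfc_arctan_mul_eq_intervalIntegral ht₀]
  rw [hsplit, algebraMap_add_mul_sub_mul_add,
    ← (hD.intervalIntegrable_cfc_div_one_add_sq ht₀).integral_mul_sub_mul]
  calc _ ≤ ‖D * a - a * D‖ * |t⁻¹ - 0| :=
        intervalIntegral.norm_integral_le_of_norm_le_const
          fun u _ => hD.norm_commutator_cfc_div_one_add_sq_le a u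
    _ = t⁻¹ * ‖D * a - a * D‖ := by rw [sub_zero, abs_of_nonneg ht₀, mul_comm]
end

section
/- Let p be an n×n Hermitian complex matrix with ‖p² − p‖ < 1/4 (operator norm). Let μ₁,…,μₙ be the eigenvalues of p counted with multiplicity. Then the matrix 2p − 1 is invertible, no μ_i equals 1/2, and the signature of 2p − 1 (the number of its positive eigenvalues minus the number of its negative eigenvalues, counted with multiplicity) equals 2·#{i : μ_i > 1/2} − n; equivalently it equals #{i : μ_i > 1/2} − #{i : μ_i < 1/2}. -/
open scoped Matrix.Norms.L2Operator

/-!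
Write `μᵢ` for the eigenvalues of `p`. Since `p² - p = cfc (x² - x) p` and the matrix algebra is a
C⋆-algebra, `|μᵢ² - μᵢ| ≤ ‖p² - p‖ < 1/4`, which rules out `μᵢ = 1/2`, where `x² - x` takes the
value `-1/4`. Likewise `2p - 1 = cfc (2x - 1) p` has characteristic polynomial
`∏ (X - (2μᵢ - 1))`, so its eigenvalues are the `2μᵢ - 1` with multiplicity: they are all nonzero,
and the positive (negative) ones correspond to the `μᵢ > 1/2` (`μᵢ < 1/2`).
-/

open Finset Polynomial

namespace Matrix.IsHermitian

variable {n 𝕜 : Type*} [RCLike 𝕜] [Fintype n] [DecidableEq n] {A : Matrix n n 𝕜}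

lemma map_eigenvalues_cfc (hA : A.IsHermitian) (f : ℝ → ℝ) (hf : (cfc f A).IsHermitian) :
    univ.val.map hf.eigenvalues = univ.val.map (f ∘ hA.eigenvalues) := by
  apply Multiset.map_injective (RCLike.ofReal_injective (K := 𝕜))
  rw [Multiset.map_map, Multiset.map_map, ← hf.roots_charpoly_eq_eigenvalues,
    hA.charpoly_cfc_eq, prod_eq_multiset_prod]
  simpa [Multiset.map_map, Function.comp_def] using
    roots_multiset_prod_X_sub_C (univ.val.map (RCLike.ofReal ∘ f ∘ hA.eigenvalues : n → 𝕜))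

lemma card_filter_eigenvalues_of_cfc_eq (hA : A.IsHermitian) (f : ℝ → ℝ) {B : Matrix n n 𝕜}
    (hB : B.IsHermitian) (hBA : cfc f A = B) {P Q : ℝ → Prop} [DecidablePred P] [DecidablePred Q]
    (hPQ : ∀ x, P (f x) ↔ Q x) :
    #{i | P (hB.eigenvalues i)} = #{i | Q (hA.eigenvalues i)} := by
  subst hBA
  simp_rw [← hPQ]
  have hcount (g : n → ℝ) : #{i | P (g i)} = (univ.val.map g).countP P := by
    rw [Multiset.countP_map]; rfl
  rw [hcount, hcount, map_eigenvalues_cfc hA]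
  rfl

end Matrix.IsHermitian

lemma Finset.card_filter_lt_add_card_filter_gt {ι α : Type*} [Fintype ι] [LinearOrder α]
    {g : ι → α} {a : α} (hg : ∀ i, g i ≠ a) :
    #{i | a < g i} + #{i | g i < a} = Fintype.card ι := by
  rw [← card_univ, ← card_filter_add_card_filter_not (s := univ) (p := fun i => a < g i)]
  simp_rw [not_lt, le_iff_lt_or_eq, hg, or_false]

/-- **signature of a quasi-projection.** Let `p` be an `n×n` Hermitian complex
matrix with `‖p² − p‖ < 1/4` in the (ℓ²-)operator norm, and let `μ₁, …, μₙ` be its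
eigenvalues counted with multiplicity.  Then `2p − 1` is invertible, no `μᵢ` equals `1/2`,
and the signature of the Hermitian matrix `2p − 1` (number of positive eigenvalues minus
number of negative eigenvalues, with multiplicity) equals `2·#{i : μᵢ > 1/2} − n`;
equivalently it equals `#{i : μᵢ > 1/2} − #{i : μᵢ < 1/2}`. -/
theorem signature_quasiProjection {n : ℕ} (p : Matrix (Fin n) (Fin n) ℂ)
    (hp : p.IsHermitian) (hnorm : ‖p * p - p‖ < 1 / 4) :
    ∃ hq : ((2 : Matrix (Fin n) (Fin n) ℂ) * p - 1).IsHermitian,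
      IsUnit ((2 : Matrix (Fin n) (Fin n) ℂ) * p - 1) ∧
      (∀ i, hp.eigenvalues i ≠ 1 / 2) ∧
      ((Finset.univ.filter fun i => 0 < hq.eigenvalues i).card : ℤ) -
          ((Finset.univ.filter fun i => hq.eigenvalues i < 0).card : ℤ) =
        2 * ((Finset.univ.filter fun i => 1 / 2 < hp.eigenvalues i).card : ℤ) - n ∧
      ((Finset.univ.filter fun i => 0 < hq.eigenvalues i).card : ℤ) -
          ((Finset.univ.filter fun i => hq.eigenvalues i < 0).card : ℤ) =
        ((Finset.univ.filter fun i => 1 / 2 < hp.eigenvalues i).card : ℤ) -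
          ((Finset.univ.filter fun i => hp.eigenvalues i < 1 / 2).card : ℤ) := by
  have hp' : IsSelfAdjoint p := hp
  have hsq : cfc (fun x : ℝ => x * x - x) p = p * p - p := by
    rw [cfc_sub (fun x : ℝ => x * x) (fun x => x) p, cfc_mul (fun x : ℝ => x) (fun x => x) p,
      cfc_id' ℝ p]
  have hq_cfc : cfc (fun x : ℝ => 2 * x - 1) p = 2 * p - 1 := by
    rw [cfc_sub (fun x : ℝ => 2 * x) (fun x => 1) p, cfc_const_mul (2 : ℝ) (fun x => x) p,
      cfc_id' ℝ p, cfc_const_one ℝ p, two_smul, two_mul]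
  have hq : (2 * p - 1).IsHermitian := hq_cfc ▸ cfc_predicate _ p
  have hμ (i : Fin n) : hp.eigenvalues i ≠ 1 / 2 := by
    intro h
    have := norm_apply_le_norm_cfc (fun x : ℝ => x * x - x) p (hp.eigenvalues_mem_spectrum_real i)
    rw [hsq, h] at this
    norm_num at this
    linarith
  have hunit : IsUnit (2 * p - 1) := by
    rw [← hq_cfc, isUnit_cfc_iff _ p, hp.spectrum_real_eq_range_eigenvalues]
    rintro _ ⟨i, rfl⟩ h
    exact hμ i (by linarith)
  have hpos := hp.card_filter_eigenvalues_of_cfc_eq _ hq hq_cfc (P := (0 < ·))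
    (Q := (1 / 2 < ·)) fun x => by constructor <;> intro <;> linarith
  have hneg := hp.card_filter_eigenvalues_of_cfc_eq _ hq hq_cfc (P := (· < 0))
    (Q := (· < 1 / 2)) fun x => by constructor <;> intro <;> linarith
  have htotal := Finset.card_filter_lt_add_card_filter_gt hμ
  rw [Fintype.card_fin] at htotal
  exact ⟨hq, hunit, hμ, by omega, by rw [hpos, hneg]⟩
end

section
/- Let A be a unital C*-algebra, v ∈ A a unitary, D ∈ A self-adjoint, and t > 0. Define c(x) := √(1/2 − x·(1+x²)^{−1/2}/2), s(x) := √(1/2 + x·(1+x²)^{−1/2}/2), and set c_t := cfc(fun x => c(x/t)) D, s_t := cfc(fun x => s(x/t)) D, r_t := √(c_t s_t) (positive square root), g := cfc(fun x => (1 + x²/t²)^{−1/4}) D, and D_t := t⁻¹·D. In M₂(A), let e := [[s_t², r_t v r_t],[r_t v* r_t, c_t²]] and L := [[D_t, v],[v*, −D_t]]. Then g is positive and invertible in A, and 2e − 1 = [[g,0],[0,g]] · L · [[g,0],[0,g]]; in particular 2e − 1 is congruent to the spectral-localiser matrix L via a positive invertible diagonal matrix. -/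
/-!
After rescaling, `c_t = c(D_t)`, `s_t = s(D_t)` and `g = (1 + D_t²)^{-1/4}`, so each entry of
the identity is the image under the functional calculus of `D_t` of a scalar identity in `y`.
With `φ(y) = y (1 + y²)^{-1/2} ∈ [-1, 1]` these are `2s² − 1 = φ`, `2c² − 1 = −φ` and
`2cs = √(1 − φ²) = (1 + y²)^{-1/2} = g²`. The last one gives `2 r_t² = g²`, so uniqueness
of positive square roots forces `r_t = g / √2`, and the off-diagonal entries `2 r_t w r_t`
become `g w g`.
-/

namespace Real

@[fun_prop]
lemma continuous_one_add_sq_rpow (p : ℝ) : Continuous fun y : ℝ => (1 + y ^ 2) ^ p :=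
  (by fun_prop : Continuous fun y : ℝ => 1 + y ^ 2).rpow_const fun _ => Or.inl (by positivity)

lemma rpow_neg_half_sq {x : ℝ} (hx : 0 ≤ x) : (x ^ (-(1 : ℝ) / 2)) ^ 2 = x⁻¹ := by
  rw [← Real.rpow_mul_natCast hx]
  norm_num [Real.rpow_neg_one]

lemma rpow_neg_quarter_sq {x : ℝ} (hx : 0 ≤ x) :
    (x ^ (-(1 : ℝ) / 4)) ^ 2 = x ^ (-(1 : ℝ) / 2) := by
  rw [← Real.rpow_mul_natCast hx]
  norm_num

lemma one_sub_sq_mul_rpow_neg_half (y : ℝ) :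
    1 - (y * (1 + y ^ 2) ^ (-(1 : ℝ) / 2)) ^ 2 = ((1 + y ^ 2) ^ (-(1 : ℝ) / 2)) ^ 2 := by
  rw [mul_pow, rpow_neg_half_sq (by positivity)]
  field_simp
  ring

lemma abs_mul_rpow_neg_half_le_one (y : ℝ) : |y * (1 + y ^ 2) ^ (-(1 : ℝ) / 2)| ≤ 1 := by
  rw [← sq_le_one_iff_abs_le_one, ← sub_nonneg, one_sub_sq_mul_rpow_neg_half]
  positivity

lemma two_mul_sqrt_half_add_sq_sub_one {z : ℝ} (hz : -1 ≤ z) :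
    2 * √(1 / 2 + z / 2) ^ 2 - 1 = z := by
  rw [Real.sq_sqrt (by linarith)]
  ring

lemma two_mul_sqrt_half_sub_sq_sub_one {z : ℝ} (hz : z ≤ 1) :
    2 * √(1 / 2 - z / 2) ^ 2 - 1 = -z := by
  rw [Real.sq_sqrt (by linarith)]
  ring

lemma two_mul_sqrt_half_sub_mul_sqrt_half_add {z : ℝ} (hz : -1 ≤ z) :
    2 * (√(1 / 2 - z / 2) * √(1 / 2 + z / 2)) = √(1 - z ^ 2) := by
  rw [← Real.sqrt_mul' _ (by linarith), show (2 : ℝ) = √(2 ^ 2) by simp,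
    ← Real.sqrt_mul (by positivity)]
  ring_nf

lemma rpow_neg_quarter_mul_mul_rpow_neg_quarter (y : ℝ) :
    (1 + y ^ 2) ^ (-(1 : ℝ) / 4) * y * (1 + y ^ 2) ^ (-(1 : ℝ) / 4) =
      y * (1 + y ^ 2) ^ (-(1 : ℝ) / 2) := by
  rw [mul_comm _ y, mul_assoc, ← sq, rpow_neg_quarter_sq (by positivity)]

lemma two_mul_sqrt_half_add_mul_rpow_sq_sub_one (y : ℝ) :
    2 * √(1 / 2 + y * (1 + y ^ 2) ^ (-(1 : ℝ) / 2) / 2) ^ 2 - 1 =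
      (1 + y ^ 2) ^ (-(1 : ℝ) / 4) * y * (1 + y ^ 2) ^ (-(1 : ℝ) / 4) := by
  rw [two_mul_sqrt_half_add_sq_sub_one (abs_le.mp (abs_mul_rpow_neg_half_le_one y)).1,
    rpow_neg_quarter_mul_mul_rpow_neg_quarter]

lemma two_mul_sqrt_half_sub_mul_rpow_sq_sub_one (y : ℝ) :
    2 * √(1 / 2 - y * (1 + y ^ 2) ^ (-(1 : ℝ) / 2) / 2) ^ 2 - 1 =
      -((1 + y ^ 2) ^ (-(1 : ℝ) / 4) * y * (1 + y ^ 2) ^ (-(1 : ℝ) / 4)) := by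
  rw [two_mul_sqrt_half_sub_sq_sub_one (abs_le.mp (abs_mul_rpow_neg_half_le_one y)).2,
    rpow_neg_quarter_mul_mul_rpow_neg_quarter]

lemma two_mul_sqrt_half_sub_mul_rpow_mul_sqrt_half_add (y : ℝ) :
    2 * (√(1 / 2 - y * (1 + y ^ 2) ^ (-(1 : ℝ) / 2) / 2) *
      √(1 / 2 + y * (1 + y ^ 2) ^ (-(1 : ℝ) / 2) / 2)) =
      ((1 + y ^ 2) ^ (-(1 : ℝ) / 4)) ^ 2 := by
  rw [two_mul_sqrt_half_sub_mul_sqrt_half_add (abs_le.mp (abs_mul_rpow_neg_half_le_one y)).1,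
    one_sub_sq_mul_rpow_neg_half, Real.sqrt_sq (by positivity),
    rpow_neg_quarter_sq (by positivity)]

end Real

section CFC

variable {A : Type*} [CStarAlgebra A] {a : A}

lemma cfc_comp_div_const (f : ℝ → ℝ) (t : ℝ) (hf : Continuous f) (ha : IsSelfAdjoint a) :
    cfc (fun x => f (x / t)) a = cfc f (t⁻¹ • a) := by
  simp_rw [div_eq_inv_mul]
  exact cfc_comp_const_mul t⁻¹ f a

lemma cfc_two_mul {f : ℝ → ℝ} (hf : Continuous f) :
    cfc (fun x => 2 * f x) a = 2 * cfc f a := by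
  rw [cfc_const_mul .., two_smul, two_mul]

lemma cfc_two_mul_sq_sub_one {f : ℝ → ℝ} (hf : Continuous f) (ha : IsSelfAdjoint a) :
    cfc (fun x => 2 * f x ^ 2 - 1) a = 2 * cfc f a ^ 2 - 1 := by
  rw [cfc_sub .., cfc_two_mul (f := fun x => f x ^ 2) (hf.pow 2), cfc_pow .., cfc_const_one ℝ a]

lemma cfc_mul_id_mul_self {k : ℝ → ℝ} (hk : Continuous k) (ha : IsSelfAdjoint a) :
    cfc (fun x => k x * x * k x) a = cfc k a * a * cfc k a := by
  rw [cfc_mul .., cfc_mul .., cfc_id' ℝ a]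

end CFC

lemma two_mul_mul_mul_eq_of_two_mul_sq_eq {A : Type*} [CStarAlgebra A] [PartialOrder A]
    [StarOrderedRing A] {r g : A} (hr : 0 ≤ r) (hg : 0 ≤ g) (h : 2 * r ^ 2 = g ^ 2) (w : A) :
    2 * (r * w * r) = g * w * g := by
  have hsqrt : (√2 * √2 : ℝ) = 2 := Real.mul_self_sqrt zero_le_two
  have hgr : √2 • r = g := by
    rw [← CFC.mul_self_eq_mul_self_iff (√2 • r) g (smul_nonneg (by positivity) hr) hg,
      smul_mul_smul_comm, hsqrt, ← sq, ← sq, ← h, two_smul, two_mul]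
  rw [← hgr, smul_mul_assoc, smul_mul_assoc, mul_smul_comm, smul_smul, hsqrt, two_smul, two_mul]

lemma Matrix.two_mul_sub_one_eq_diag_mul_mul_diag {R : Type*} [Ring R] {a b c d g p q r s : R}
    (h₁₁ : 2 * a - 1 = g * p * g) (h₁₂ : 2 * b = g * q * g) (h₂₁ : 2 * c = g * r * g)
    (h₂₂ : 2 * d - 1 = g * s * g) :
    2 * !![a, b; c, d] - 1 = !![g, 0; 0, g] * !![p, q; r, s] * !![g, 0; 0, g] := by
  rw [two_mul] at *
  ext i j
  fin_cases i <;> fin_cases j <;> simp [h₁₁, h₁₂, h₂₁, h₂₂]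

theorem spectral_localiser_congruence_general {A : Type*} [CStarAlgebra A] [PartialOrder A]
    [StarOrderedRing A] (v : A) (D : A) (hD : IsSelfAdjoint D)
    (t : ℝ) :
    let c : ℝ → ℝ := fun x => Real.sqrt (1 / 2 - x * (1 + x ^ 2) ^ (-(1 : ℝ) / 2) / 2)
    let s : ℝ → ℝ := fun x => Real.sqrt (1 / 2 + x * (1 + x ^ 2) ^ (-(1 : ℝ) / 2) / 2)
    let ct := cfc (fun x : ℝ => c (x / t)) D
    let st := cfc (fun x : ℝ => s (x / t)) D
    let g := cfc (fun x : ℝ => (1 + x ^ 2 / t ^ 2) ^ (-(1 : ℝ) / 4)) D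
    let Dt := t⁻¹ • D
    ∀ rt : A, 0 ≤ rt → rt ^ 2 = ct * st →
      (0 ≤ g ∧ IsUnit g) ∧
      2 * (!![st ^ 2, rt * v * rt; rt * star v * rt, ct ^ 2] : Matrix (Fin 2) (Fin 2) A) - 1 =
        !![g, 0; 0, g] * !![Dt, v; star v, -Dt] * !![g, 0; 0, g] := by
  intro c s ct st g Dt rt hrt hrt2
  have hDt : IsSelfAdjoint Dt := .smul (.all t⁻¹) hD
  have hc : Continuous c := by fun_prop
  have hs : Continuous s := by fun_prop
  have hk : Continuous fun y : ℝ => (1 + y ^ 2) ^ (-(1 : ℝ) / 4) :=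
    Real.continuous_one_add_sq_rpow _
  have hct : ct = cfc c Dt := cfc_comp_div_const c t hc hD
  have hst : st = cfc s Dt := cfc_comp_div_const s t hs hD
  have hg : g = cfc (fun y : ℝ => (1 + y ^ 2) ^ (-(1 : ℝ) / 4)) Dt := by
    rw [← cfc_comp_div_const _ t hk hD]
    simp only [div_pow, g]
  have hg0 : 0 ≤ g := hg ▸ cfc_nonneg fun y _ => by positivity
  have hgu : IsUnit g := hg ▸ (isUnit_cfc_iff _ Dt hk.continuousOn).mpr fun y _ => by positivity
  have hs2 : 2 * st ^ 2 - 1 = g * Dt * g := by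
    rw [hst, hg, ← cfc_two_mul_sq_sub_one hs hDt, ← cfc_mul_id_mul_self hk hDt]
    exact cfc_congr fun y _ => Real.two_mul_sqrt_half_add_mul_rpow_sq_sub_one y
  have hc2 : 2 * ct ^ 2 - 1 = g * (-Dt) * g := by
    rw [hct, hg, ← cfc_two_mul_sq_sub_one hc hDt, mul_neg, neg_mul,
      ← cfc_mul_id_mul_self hk hDt, ← cfc_neg]
    exact cfc_congr fun y _ => Real.two_mul_sqrt_half_sub_mul_rpow_sq_sub_one y
  have hr2 : 2 * rt ^ 2 = g ^ 2 := by
    rw [hrt2, hct, hst, hg, ← cfc_mul c s Dt hc.continuousOn hs.continuousOn,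
      ← cfc_two_mul (f := fun y => c y * s y) (hc.mul hs), ← cfc_pow _ 2 Dt hk.continuousOn]
    exact cfc_congr fun y _ => Real.two_mul_sqrt_half_sub_mul_rpow_mul_sqrt_half_add y
  exact ⟨⟨hg0, hgu⟩, Matrix.two_mul_sub_one_eq_diag_mul_mul_diag hs2
    (two_mul_mul_mul_eq_of_two_mul_sq_eq hrt hg0 hr2 v)
    (two_mul_mul_mul_eq_of_two_mul_sq_eq hrt hg0 hr2 (star v)) hc2⟩

/-- Let `v` be a unitary and `D` a self-adjoint element of a unital
C*-algebra `A`, and `t > 0`.  With `c_t := c(·/t)(D)`, `s_t := s(·/t)(D)`,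
`g := (1 + ·²/t²)^{−1/4}(D)` given by the continuous functional calculus, `D_t := t⁻¹·D`,
and `r_t` the positive square root of `c_t s_t` (characterized by `0 ≤ r_t` and
`r_t² = c_t s_t`), set `e := [[s_t², r_t v r_t],[r_t v* r_t, c_t²]]` and
`L := [[D_t, v],[v*, −D_t]]` in `M₂(A)`.  Then `g` is positive and invertible, and
`2e − 1 = diag(g,g) · L · diag(g,g)`; in particular `2e − 1` is congruent to the
spectral-localiser matrix `L` via a positive invertible diagonal matrix. -/
theorem spectral_localiser_congruence {A : Type*} [CStarAlgebra A] [PartialOrder A]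
    [StarOrderedRing A] (v : A) (hv : v ∈ unitary A) (D : A) (hD : IsSelfAdjoint D)
    (t : ℝ) (ht : 0 < t) :
    let c : ℝ → ℝ := fun x => Real.sqrt (1 / 2 - x * (1 + x ^ 2) ^ (-(1 : ℝ) / 2) / 2)
    let s : ℝ → ℝ := fun x => Real.sqrt (1 / 2 + x * (1 + x ^ 2) ^ (-(1 : ℝ) / 2) / 2)
    let ct := cfc (fun x : ℝ => c (x / t)) D
    let st := cfc (fun x : ℝ => s (x / t)) D
    let g := cfc (fun x : ℝ => (1 + x ^ 2 / t ^ 2) ^ (-(1 : ℝ) / 4)) D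
    let Dt := t⁻¹ • D
    ∀ rt : A, 0 ≤ rt → rt ^ 2 = ct * st →
      (0 ≤ g ∧ IsUnit g) ∧
      2 * (!![st ^ 2, rt * v * rt; rt * star v * rt, ct ^ 2] : Matrix (Fin 2) (Fin 2) A) - 1 =
        !![g, 0; 0, g] * !![Dt, v; star v, -Dt] * !![g, 0; 0, g] :=
  spectral_localiser_congruence_general v D hD t
end
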